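/- arXiv:2305.18581 — 2 statements merged into one kernel-verified Lean document; each statement's English description precedes it below -/
import Mathlib

section
/- Let A = rng(a) and V = rng(v) be infinite c.e. sets with a, v injective computable functions, and suppose A is not computable. Then the c.e. set A^V = {v(s) : ∃t > s, a(t) < v(s)} is infinite. -/
open Classical in
/-- Characteristic function of a set of naturals. -/
noncomputable def chi (A : Set ℕ) : ℕ → ℕ := fun n => if n ∈ A then 1 else 0

/-- Partial functions computable relative to an oracle `O : ℕ → ℕ`. -/
inductive RecursiveInFn (O : ℕ → ℕ) : (ℕ →. ℕ) → Prop
  | zero : RecursiveInFn O (pure 0)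
  | succ : RecursiveInFn O Nat.succ
  | left : RecursiveInFn O ↑fun n : ℕ => n.unpair.1
  | right : RecursiveInFn O ↑fun n : ℕ => n.unpair.2
  | oracle : RecursiveInFn O ↑O
  | pair {f g} : RecursiveInFn O f → RecursiveInFn O g →
      RecursiveInFn O fun n => Nat.pair <$> f n <*> g n
  | comp {f g} : RecursiveInFn O f → RecursiveInFn O g →
      RecursiveInFn O fun n => g n >>= f
  | prec {f g} : RecursiveInFn O f → RecursiveInFn O g →
      RecursiveInFn O (Nat.unpaired fun a n =>
        n.rec (f a) fun y IH => do let i ← IH; g (Nat.pair a (Nat.pair y i)))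
  | rfind {f} : RecursiveInFn O f →
      RecursiveInFn O fun a => Nat.rfind fun n => (fun m => m = 0) <$> f (Nat.pair a n)

/-- Turing reducibility between sets of naturals: `A ≤_T B`. -/
def SetTuringRed (A B : Set ℕ) : Prop := RecursiveInFn (chi B) ↑(chi A)

/-- `A` is computably enumerable. -/
def CE (A : Set ℕ) : Prop := ∃ f : ℕ →. ℕ, Nat.Partrec f ∧ ∀ n, n ∈ A ↔ (f n).Dom

/-- `A` is c.e. relative to the oracle `O`. -/
def CEIn (O : ℕ → ℕ) (A : Set ℕ) : Prop :=
  ∃ f : ℕ →. ℕ, RecursiveInFn O f ∧ ∀ n, n ∈ A ↔ (f n).Dom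

/-- A uniformly c.e. sequence of sets. -/
def UnifCE (A : ℕ → Set ℕ) : Prop :=
  ∃ f : ℕ →. ℕ, Nat.Partrec f ∧ ∀ i x, x ∈ A i ↔ (f (Nat.pair i x)).Dom

/-- The Dekker-style subset `A^V` built from enumerations `a` of `A` and `v` of `V`. -/
def DekkerOp (a v : ℕ → ℕ) : Set ℕ := {n | ∃ s, n = v s ∧ ∃ t > s, a t < v s}

/-!
If `A^V` were finite, then from some stage `s₀` on every element `v s` enumerated into `V` would
lie below all later elements `a t` of `A`. Since `v` is injective it takes arbitrarily large
values after `s₀`, so to decide whether `n ∈ A` one waits for a stage `s ≥ s₀` with `n < v s`: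
after that stage `n` can no longer be enumerated into `A`. Hence `A` would be computable.
-/

open Filter

theorem Function.Injective.tendsto_atTop_nat {v : ℕ → ℕ} (hv : v.Injective) :
    Tendsto v atTop atTop := by
  simpa only [Nat.cofinite_eq_atTop] using hv.tendsto_cofinite

theorem DekkerOp.exists_le_of_finite {a v : ℕ → ℕ} (hv : v.Injective)
    (hfin : (DekkerOp a v).Finite) : ∃ s₀, ∀ s ≥ s₀, ∀ t > s, v s ≤ a t := by
  have hstages : {s | ∃ t > s, a t < v s}.Finite :=
    Set.Finite.of_finite_image (hfin.subset (by rintro _ ⟨s, hs, rfl⟩; exact ⟨s, rfl, hs⟩))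
      hv.injOn
  obtain ⟨s₁, hs₁⟩ := hstages.bddAbove
  refine ⟨s₁ + 1, fun s hs t hts => not_lt.1 fun hlt => ?_⟩
  have : s ≤ s₁ := hs₁ ⟨t, hts, hlt⟩
  omega

section DecideRange

variable {a v : ℕ → ℕ} {s₀ : ℕ}

def rangeSearchStop (a v : ℕ → ℕ) (s₀ n s : ℕ) : Bool :=
  decide (a s = n) || (decide (s₀ ≤ s) && decide (n < v s))

theorem computable₂_rangeSearchStop (ha : Computable a) (hv : Computable v) (s₀ : ℕ) :
    Computable₂ (rangeSearchStop a v s₀) :=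
  (Primrec.or.to_comp.comp
    (Primrec.eq.decide.to_comp.comp (ha.comp Computable.snd) Computable.fst)
    (Primrec.and.to_comp.comp
      (Primrec.nat_le.decide.to_comp.comp (Computable.const s₀) Computable.snd)
      (Primrec.nat_lt.decide.to_comp.comp Computable.fst (hv.comp Computable.snd)))).of_eq
    fun _ => rfl

def rangeSearch (a v : ℕ → ℕ) (s₀ n : ℕ) : Part Bool :=
  (Nat.rfind fun s => Part.some (rangeSearchStop a v s₀ n s)).map fun k => decide (a k = n)

theorem partrec_rangeSearch (ha : Computable a) (hv : Computable v) (s₀ : ℕ) :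
    Partrec (rangeSearch a v s₀) :=
  (Partrec.rfind (computable₂_rangeSearchStop ha hv s₀).partrec₂).map
    (Primrec.eq.decide.to_comp.comp (ha.comp Computable.snd) Computable.fst)

theorem mem_range_iff_of_isLeast_rangeSearchStop (hle : ∀ s ≥ s₀, ∀ t > s, v s ≤ a t)
    {n k : ℕ} (hk : rangeSearchStop a v s₀ n k = true)
    (hmin : ∀ m < k, rangeSearchStop a v s₀ n m = false) :
    n ∈ Set.range a ↔ a k = n := by
  refine ⟨fun ⟨t, hat⟩ => ?_, fun h => ⟨k, h⟩⟩
  by_contra hak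
  simp only [rangeSearchStop, hak, decide_false, Bool.false_or, Bool.and_eq_true,
    decide_eq_true_eq] at hk
  obtain hkt | rfl | htk := lt_trichotomy k t
  · exact absurd (hle k hk.1 t hkt) (by omega)
  · exact hak hat
  · simpa [rangeSearchStop, hat] using hmin t htk

theorem computablePred_mem_range_of_eventually_le (ha : Computable a) (hv : Computable v)
    (hvtop : Tendsto v atTop atTop) (hle : ∀ s ≥ s₀, ∀ t > s, v s ≤ a t) :
    ComputablePred (· ∈ Set.range a) := by
  classical
  have hdecide : ∀ n, decide (n ∈ Set.range a) ∈ rangeSearch a v s₀ n := by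
    intro n
    obtain ⟨s, hns, hs⟩ := ((hvtop.eventually_gt_atTop n).and (eventually_ge_atTop s₀)).exists
    obtain ⟨k, hk, -⟩ := Nat.rfind_min' (p := rangeSearchStop a v s₀ n) (m := s)
      (by simp [rangeSearchStop, hs, hns])
    refine Part.mem_map_iff _ |>.2 ⟨k, hk, ?_⟩
    exact decide_eq_decide.2 <| (mem_range_iff_of_isLeast_rangeSearchStop hle
      (by simpa using Nat.rfind_spec hk) fun m hm => by simpa using Nat.rfind_min hk hm).symm
  exact ComputablePred.computable_iff.2
    ⟨_, (partrec_rangeSearch ha hv s₀).of_eq_tot hdecide, funext fun n => by simp⟩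

end DecideRange

theorem stmt2_general (a v : ℕ → ℕ) (ha : Computable a) (hv : Computable v)
    (hvinj : Function.Injective v)
    (hAnc : ¬ComputablePred (· ∈ Set.range a)) :
    (DekkerOp a v).Infinite := by
  intro hfin
  obtain ⟨s₀, hle⟩ := DekkerOp.exists_le_of_finite hvinj hfin
  exact hAnc <| computablePred_mem_range_of_eventually_le ha hv hvinj.tendsto_atTop_nat hle

theorem stmt2 (a v : ℕ → ℕ) (ha : Computable a) (hv : Computable v)
    (hainj : Function.Injective a) (hvinj : Function.Injective v)
    (hAinf : (Set.range a).Infinite) (hVinf : (Set.range v).Infinite)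
    (hAnc : ¬ComputablePred (· ∈ Set.range a)) :
    (DekkerOp a v).Infinite :=
  stmt2_general a v ha hv hvinj hAnc
end

section
/- Let E be a c.e. set and F = W_e^E an E-c.e. set admitting a computable approximation F(x) = lim_s F_s(x), F_s(x) ∈ {0,1}, with F_0(x) = 1, F_1(x) = 0, satisfying: for all x < y < s < t, if F_s(x) ≠ F_{s+1}(x) then F_s(y) = F_t(y). Define F̃ = {⟨y,t⟩ : F_t(y) = F(y) = 1, F_{t+1}(y) = 0}, Ũ = {⟨y,t⟩ : ∃x ∃s (x < y < s ∧ F_s(x) ≠ F_{s+1}(x) ∧ F_s(y) = F_t(y) = 1) ∧ F_{t+1}(y) = 0}, and Ṽ = {⟨y,t⟩ : ∃s > t (F_s(y) = F_t(y) = 1) ∧ F_{t+1}(y) = 0}. Then Ũ and Ṽ are c.e., Ũ ⊆ F̃ ⊆ Ṽ, and for every set Z with Ũ ⊆ Z ⊆ Ṽ, F ≤_T E ⊕ Z. -/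
/-- The effective join of two sets of naturals. -/
def join (A B : Set ℕ) : Set ℕ :=
  {n | (∃ m ∈ A, n = 2 * m) ∨ (∃ m ∈ B, n = 2 * m + 1)}

/-!
Let an exit of `w` be a stage `t` with `F_t(w) = 1` and `F_{t+1}(w) = 0`. A change of some
`x < y` at a stage `s > y` freezes `y` at its limit; this gives `Ũ ⊆ F̃ ⊆ Ṽ`, and it shows that
if `w ∈ F` has an exit `t` with `⟨w, t⟩ ∉ Z ⊇ Ũ`, then nothing below `w` changes after stage `w`,
so `F(y) = F_{w+1}(y)` for `y < w`.

If infinitely many `w ∈ F` have an exit outside `Z`, then `E ⊕ Z` computes `F(y)` by searching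
for such a `w > y` (enumerating `F` with the help of `E`). Otherwise, above some bound, no element
of `F` has an exit outside `Z`, while every `y ∉ F` has one (its last exit, which is not in `Ṽ`),
so `E ⊕ Z` decides `y ∈ F` by waiting for either event.

Both searches run over stages: a computation relative to `O` is approximated primitive
recursively from the first `k` values of `O`, correctly and eventually (the use principle).
-/

open Filter (atTop eventually_gt_atTop eventually_all_finset)

namespace RecursiveInFn

variable {O : ℕ → ℕ}

theorem of_eq {f g : ℕ →. ℕ} (hf : RecursiveInFn O f) (e : ∀ n, f n = g n) :
    RecursiveInFn O g :=
  funext e ▸ hf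

theorem of_natPartrec {f : ℕ →. ℕ} (hf : Nat.Partrec f) : RecursiveInFn O f := by
  induction hf with
  | zero => exact .zero
  | succ => exact .succ
  | left => exact .left
  | right => exact .right
  | pair _ _ ihf ihg => exact .pair ihf ihg
  | comp _ _ ihf ihg => exact .comp ihf ihg
  | prec _ _ ihf ihg => exact .prec ihf ihg
  | rfind _ ihf => exact .rfind ihf

theorem of_computable {f : ℕ → ℕ} (hf : Computable f) : RecursiveInFn O ↑f :=
  of_natPartrec (Partrec.nat_iff.1 hf.partrec)

theorem trans {O' : ℕ → ℕ} {f : ℕ →. ℕ} (hf : RecursiveInFn O' f)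
    (hO' : RecursiveInFn O ↑O') : RecursiveInFn O f := by
  induction hf with
  | zero => exact .zero
  | succ => exact .succ
  | left => exact .left
  | right => exact .right
  | oracle => exact hO'
  | pair _ _ ihf ihg => exact .pair ihf ihg
  | comp _ _ ihf ihg => exact .comp ihf ihg
  | prec _ _ ihf ihg => exact .prec ihf ihg
  | rfind _ ihf => exact .rfind ihf

theorem comp_total {f g : ℕ → ℕ} (hf : RecursiveInFn O ↑f) (hg : RecursiveInFn O ↑g) :
    RecursiveInFn O ↑(fun n => f (g n)) :=
  (hf.comp hg).of_eq fun _ => Part.bind_some _ _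

theorem pair_total {f g : ℕ → ℕ} (hf : RecursiveInFn O ↑f) (hg : RecursiveInFn O ↑g) :
    RecursiveInFn O ↑(fun n => Nat.pair (f n) (g n)) :=
  (hf.pair hg).of_eq fun _ => by simp [Seq.seq]

end RecursiveInFn

def oracleTab (O : ℕ → ℕ) (k : ℕ) : List ℕ := (List.range k).map O

@[simp]
theorem length_oracleTab (O : ℕ → ℕ) (k : ℕ) : (oracleTab O k).length = k := by
  simp [oracleTab]

theorem getElem?_oracleTab_eq_some {O : ℕ → ℕ} {k i v : ℕ} :
    (oracleTab O k)[i]? = some v ↔ i < k ∧ O i = v := by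
  rw [oracleTab, List.getElem?_map]
  by_cases h : i < k <;> simp [h]

theorem recursiveInFn_encode_oracleTab (O : ℕ → ℕ) :
    RecursiveInFn O ↑(fun k => Encodable.encode (oracleTab O k)) := by
  let snoc : ℕ → ℕ := fun p =>
    Encodable.encode (Denumerable.ofNat (List ℕ) p.unpair.1.unpair.2.unpair.2 ++ [p.unpair.2])
  have hsnoc : Computable snoc :=
    Computable.encode.comp (Computable.list_concat.comp ((Computable.ofNat _).comp
      (Computable.snd.comp (Computable.unpair.comp (Computable.snd.comp
        (Computable.unpair.comp (Computable.fst.comp Computable.unpair))))))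
      (Computable.snd.comp Computable.unpair))
  have hstep : RecursiveInFn O ↑(fun p => snoc (Nat.pair p (O p.unpair.2.unpair.1))) :=
    (RecursiveInFn.of_computable hsnoc).comp_total
      ((RecursiveInFn.of_computable Computable.id).pair_total
        (RecursiveInFn.oracle.comp_total (RecursiveInFn.of_computable
          (Primrec.fst.comp (Primrec.unpair.comp (Primrec.snd.comp Primrec.unpair))).to_comp)))
  have hrec := (RecursiveInFn.prec
      (RecursiveInFn.of_computable (Computable.const (Encodable.encode ([] : List ℕ)))) hstep).comp
    (RecursiveInFn.of_computable (f := fun k => Nat.pair 0 k)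
      (Primrec₂.natPair.comp (Primrec.const 0) Primrec.id).to_comp)
  refine hrec.of_eq fun k => ?_
  simp only [PFun.coe_val, Part.bind_eq_bind, Part.bind_some, Nat.unpaired, Nat.unpair_pair]
  induction k with
  | zero => rfl
  | succ k ih =>
    show Part.bind _ _ = _
    rw [ih]
    simp [snoc, oracleTab, List.range_succ]

theorem recursiveInFn_comp_oracleTab {O : ℕ → ℕ} {q : ℕ → List ℕ → ℕ} {ℓ : ℕ → ℕ}
    (hq : Computable₂ q) (hℓ : Computable ℓ) :
    RecursiveInFn O ↑(fun n => q n (oracleTab O (ℓ n))) := by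
  have hq' : Computable fun p : ℕ => q p.unpair.1 (Denumerable.ofNat (List ℕ) p.unpair.2) :=
    hq.comp (Computable.fst.comp Computable.unpair)
      ((Computable.ofNat _).comp (Computable.snd.comp Computable.unpair))
  refine ((RecursiveInFn.of_computable hq').comp_total
    ((RecursiveInFn.of_computable Computable.id).pair_total
      ((recursiveInFn_encode_oracleTab O).comp_total (RecursiveInFn.of_computable hℓ)))).of_eq
    fun n => ?_
  simp

theorem recursiveInFn_of_search {O h : ℕ → ℕ} {g : ℕ → ℕ → List ℕ → Option ℕ}
    (hg : Computable fun p : ℕ × ℕ × List ℕ => g p.1 p.2.1 p.2.2)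
    (hex : ∀ y, ∃ j k, (g y j (oracleTab O k)).isSome)
    (hsound : ∀ y j k v, g y j (oracleTab O k) = some v → v = h y) :
    RecursiveInFn O ↑h := by
  let stage : ℕ → List ℕ → Option ℕ := fun n L => g n.unpair.1 n.unpair.2.unpair.1 L
  have hstage : Computable₂ stage :=
    hg.comp ((Computable.fst.comp (Computable.unpair.comp Computable.fst)).pair
      ((Computable.fst.comp (Computable.unpair.comp
        (Computable.snd.comp (Computable.unpair.comp Computable.fst)))).pair Computable.snd))
  have hℓ : Computable fun n : ℕ => n.unpair.2.unpair.2 :=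
    (Primrec.snd.comp (Primrec.unpair.comp (Primrec.snd.comp Primrec.unpair))).to_comp
  let test : ℕ → ℕ := fun n => bif (stage n (oracleTab O n.unpair.2.unpair.2)).isSome then 0 else 1
  have htest : RecursiveInFn O ↑test := recursiveInFn_comp_oracleTab
    (Computable.cond (Primrec.option_isSome.to_comp.comp hstage) (Computable.const 0)
      (Computable.const 1)).to₂ hℓ
  have hout := recursiveInFn_comp_oracleTab (O := O) (q := fun n L => (stage n L).getD 0)
    (Computable.option_getD hstage (Computable.const 0)).to₂ hℓ
  refine (hout.comp ((RecursiveInFn.of_computable Computable.id).pair htest.rfind)).of_eq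
    fun y => ?_
  obtain ⟨j, k, hjk⟩ := hex y
  obtain ⟨m, hm⟩ := Part.dom_iff_mem.1 <| (Nat.rfind_dom (p := fun m =>
    (fun v => decide (v = 0)) <$> (↑test : ℕ →. ℕ) (Nat.pair y m))).2
    ⟨Nat.pair j k, by simpa [test, stage, Bool.cond_eq_ite, Option.isSome_iff_ne_none] using hjk,
      fun _ => trivial⟩
  obtain ⟨v, hv⟩ : ∃ v, g y m.unpair.1 (oracleTab O m.unpair.2) = some v :=
    Option.ne_none_iff_exists'.1 (by simpa [test, stage, Bool.cond_eq_ite] using Nat.rfind_spec hm)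
  obtain rfl := hsound _ _ _ _ hv
  have hpair : (Nat.pair <$> (↑(id : ℕ → ℕ) : ℕ →. ℕ) y <*> Part.some m) =
      Part.some (Nat.pair y m) := by
    simp [Seq.seq]
  rw [Part.eq_some_iff.2 hm, hpair]
  exact (Part.bind_some (Nat.pair y m)
    fun n => Part.some ((stage n (oracleTab O n.unpair.2.unpair.2)).getD 0)).trans
    (by simp [stage, hv])

/-- `ev L n` is a run of `f n` that may only query the oracle values recorded in `L` and searches
no further than `L.length`: its answers are correct, and every value of `f` is eventually found. -/
structure IsStageApprox (O : ℕ → ℕ) (f : ℕ →. ℕ) (ev : List ℕ → ℕ → Option ℕ) : Prop where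
  mem_of_eq_some {k n v : ℕ} : ev (oracleTab O k) n = some v → v ∈ f n
  eventually_eq_some {n v : ℕ} : v ∈ f n → ∀ᶠ k in atTop, ev (oracleTab O k) n = some v

namespace IsStageApprox

variable {O : ℕ → ℕ} {f g : ℕ →. ℕ} {evf evg : List ℕ → ℕ → Option ℕ}

theorem total (h : ℕ → ℕ) : IsStageApprox O ↑h fun _ n => some (h n) where
  mem_of_eq_some hv := by simpa [eq_comm] using hv
  eventually_eq_some hv := by simp_all

theorem oracle : IsStageApprox O ↑O fun L n => L[n]? where
  mem_of_eq_some hv := by simpa [eq_comm] using (getElem?_oracleTab_eq_some.1 hv).2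
  eventually_eq_some {n v} hv := by
    filter_upwards [eventually_gt_atTop n] with k hk
    exact getElem?_oracleTab_eq_some.2 ⟨hk, by simpa [eq_comm] using hv⟩

theorem pair (hf : IsStageApprox O f evf) (hg : IsStageApprox O g evg) :
    IsStageApprox O (fun n => Nat.pair <$> f n <*> g n)
      fun L n => (evf L n).bind fun x => (evg L n).map (Nat.pair x) where
  mem_of_eq_some hv := by
    obtain ⟨x, hx, y, hy, rfl⟩ := by
      simpa only [Option.bind_eq_some_iff, Option.map_eq_some_iff] using hv
    simp only [Seq.seq, Part.map_eq_map, Part.mem_bind_iff, Part.mem_map_iff]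
    exact ⟨_, ⟨x, hf.mem_of_eq_some hx, rfl⟩, y, hg.mem_of_eq_some hy, rfl⟩
  eventually_eq_some hv := by
    simp only [Seq.seq, Part.map_eq_map, Part.mem_bind_iff, Part.mem_map_iff] at hv
    obtain ⟨_, ⟨x, hx, rfl⟩, y, hy, rfl⟩ := hv
    filter_upwards [hf.eventually_eq_some hx, hg.eventually_eq_some hy] with k hxk hyk
    simp [hxk, hyk]

theorem comp (hf : IsStageApprox O f evf) (hg : IsStageApprox O g evg) :
    IsStageApprox O (fun n => g n >>= f) fun L n => (evg L n).bind (evf L) where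
  mem_of_eq_some hv := by
    obtain ⟨x, hx, hv⟩ := Option.bind_eq_some_iff.1 hv
    exact Part.mem_bind_iff.2 ⟨x, hg.mem_of_eq_some hx, hf.mem_of_eq_some hv⟩
  eventually_eq_some hv := by
    obtain ⟨x, hx, hv⟩ := Part.mem_bind_iff.1 hv
    filter_upwards [hg.eventually_eq_some hx, hf.eventually_eq_some hv] with k hxk hvk
    simp [hxk, hvk]

theorem prec (hf : IsStageApprox O f evf) (hg : IsStageApprox O g evg) :
    IsStageApprox O (Nat.unpaired fun a n =>
        n.rec (f a) fun y IH => do let i ← IH; g (Nat.pair a (Nat.pair y i)))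
      fun L n => n.unpair.2.rec (evf L n.unpair.1)
        fun y IH => IH.bind fun i => evg L (Nat.pair n.unpair.1 (Nat.pair y i)) where
  mem_of_eq_some {k n v} hv := by
    simp only [Nat.unpaired] at hv ⊢
    generalize n.unpair.1 = a, n.unpair.2 = m at hv ⊢
    induction m generalizing v with
    | zero => exact hf.mem_of_eq_some hv
    | succ m ih =>
      obtain ⟨i, hi, hv⟩ := Option.bind_eq_some_iff.1 hv
      exact Part.mem_bind_iff.2 ⟨i, ih hi, hg.mem_of_eq_some hv⟩
  eventually_eq_some {n v} hv := by
    simp only [Nat.unpaired] at hv ⊢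
    generalize n.unpair.1 = a, n.unpair.2 = m at hv ⊢
    induction m generalizing v with
    | zero => exact hf.eventually_eq_some hv
    | succ m ih =>
      obtain ⟨i, hi, hv⟩ := Part.mem_bind_iff.1 hv
      filter_upwards [ih hi, hg.eventually_eq_some hv] with k hik hvk
      exact Option.bind_eq_some_iff.2 ⟨i, hik, hvk⟩

theorem rfind (hf : IsStageApprox O f evf) :
    IsStageApprox O (fun a => Nat.rfind fun n => (fun m => decide (m = 0)) <$> f (Nat.pair a n))
      fun L a =>
        let i := (List.range L.length).findIdx fun m => decide ((evf L (Nat.pair a m)).getD 0 = 0)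
        if evf L (Nat.pair a i) = some 0 then some i else none where
  mem_of_eq_some {k a v} hv := by
    simp only [length_oracleTab] at hv
    split_ifs at hv with h0
    cases hv
    refine Nat.mem_rfind.2 ⟨Part.mem_map_iff _ |>.2 ⟨0, hf.mem_of_eq_some h0, rfl⟩,
      fun {m} hm => ?_⟩
    have hpos := List.not_of_lt_findIdx hm
    simp only [List.getElem_range, decide_eq_false_iff_not] at hpos
    obtain ⟨w, hw⟩ : ∃ w, evf (oracleTab O k) (Nat.pair a m) = some w := by
      cases h : evf (oracleTab O k) (Nat.pair a m) <;> simp_all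
    refine Part.mem_map_iff _ |>.2 ⟨w, hf.mem_of_eq_some hw, ?_⟩
    simp_all
  eventually_eq_some {a v} hv := by
    obtain ⟨hv0, hlt⟩ := Nat.mem_rfind.1 hv
    obtain ⟨u, hu, hu0⟩ := Part.mem_map_iff _ |>.1 hv0
    obtain rfl : u = 0 := by simpa using hu0
    have hpos : ∀ᶠ k in atTop, ∀ m ∈ Finset.range v,
        ∃ w ≠ 0, evf (oracleTab O k) (Nat.pair a m) = some w := by
      refine (eventually_all_finset _).2 fun m hm => ?_
      obtain ⟨w, hw, hw0⟩ := Part.mem_map_iff _ |>.1 (hlt (Finset.mem_range.1 hm))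
      filter_upwards [hf.eventually_eq_some hw] with k hk
      exact ⟨w, by simpa using hw0, hk⟩
    filter_upwards [eventually_gt_atTop v, hf.eventually_eq_some hu, hpos] with k hvk hk0 hkpos
    have hidx : (List.range k).findIdx
        (fun m => decide ((evf (oracleTab O k) (Nat.pair a m)).getD 0 = 0)) = v := by
      refine (List.findIdx_eq (by simpa using hvk)).2 ⟨by simp [hk0], fun j hj => ?_⟩
      obtain ⟨w, hw0, hw⟩ := hkpos j (Finset.mem_range.2 hj)
      simp [hw, hw0]
    simp [hidx, hk0]

theorem dom_of_isSome {ev : List ℕ → ℕ → Option ℕ} (h : IsStageApprox O f ev) {k n : ℕ}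
    (hn : (ev (oracleTab O k) n).isSome) : (f n).Dom := by
  obtain ⟨v, hv⟩ := Option.isSome_iff_exists.1 hn
  exact Part.dom_iff_mem.2 ⟨v, h.mem_of_eq_some hv⟩

theorem eventually_isSome {ev : List ℕ → ℕ → Option ℕ} (h : IsStageApprox O f ev) {n : ℕ}
    (hn : (f n).Dom) :
    ∀ᶠ k in atTop, (ev (oracleTab O k) n).isSome := by
  obtain ⟨v, hv⟩ := Part.dom_iff_mem.1 hn
  filter_upwards [h.eventually_eq_some hv] with k hk
  simp [hk]

end IsStageApprox

theorem RecursiveInFn.exists_stageApprox {O : ℕ → ℕ} {f : ℕ →. ℕ} (hf : RecursiveInFn O f) :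
    ∃ ev, Primrec₂ ev ∧ IsStageApprox O f ev := by
  induction hf with
  | zero => exact ⟨_, Primrec₂.const (some 0), IsStageApprox.total fun _ => 0⟩
  | succ => exact ⟨_, (Primrec.option_some.comp (Primrec.succ.comp Primrec.snd)).to₂,
      IsStageApprox.total Nat.succ⟩
  | left => exact ⟨_,
      (Primrec.option_some.comp (Primrec.fst.comp (Primrec.unpair.comp Primrec.snd))).to₂,
      IsStageApprox.total fun n => n.unpair.1⟩
  | right => exact ⟨_,
      (Primrec.option_some.comp (Primrec.snd.comp (Primrec.unpair.comp Primrec.snd))).to₂,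
      IsStageApprox.total fun n => n.unpair.2⟩
  | oracle => exact ⟨_, Primrec.list_getElem?, IsStageApprox.oracle⟩
  | pair _ _ ihf ihg =>
    obtain ⟨evf, hpf, hf⟩ := ihf
    obtain ⟨evg, hpg, hg⟩ := ihg
    refine ⟨_, ?_, hf.pair hg⟩
    exact Primrec.option_bind hpf (Primrec.option_map
      (hpg.comp (Primrec.fst.comp Primrec.fst) (Primrec.snd.comp Primrec.fst))
      (Primrec₂.natPair.comp (Primrec.snd.comp Primrec.fst) Primrec.snd))
  | comp _ _ ihf ihg =>
    obtain ⟨evf, hpf, hf⟩ := ihf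
    obtain ⟨evg, hpg, hg⟩ := ihg
    refine ⟨_, ?_, hf.comp hg⟩
    exact Primrec.option_bind hpg (hpf.comp (Primrec.fst.comp Primrec.fst) Primrec.snd)
  | prec _ _ ihf ihg =>
    obtain ⟨evf, hpf, hf⟩ := ihf
    obtain ⟨evg, hpg, hg⟩ := ihg
    refine ⟨_, ?_, hf.prec hg⟩
    exact Primrec.nat_rec' (Primrec.snd.comp (Primrec.unpair.comp Primrec.snd))
      (hpf.comp Primrec.fst (Primrec.fst.comp (Primrec.unpair.comp Primrec.snd)))
      (Primrec.option_bind (Primrec.snd.comp Primrec.snd)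
        (hpg.comp (Primrec.fst.comp (Primrec.fst.comp Primrec.fst))
          (Primrec₂.natPair.comp (Primrec.fst.comp
              (Primrec.unpair.comp (Primrec.snd.comp (Primrec.fst.comp Primrec.fst))))
            (Primrec₂.natPair.comp (Primrec.fst.comp (Primrec.snd.comp Primrec.fst))
              Primrec.snd))).to₂).to₂
  | rfind _ ihf =>
    obtain ⟨evf, hpf, hf⟩ := ihf
    refine ⟨_, ?_, hf.rfind⟩
    have hi : Primrec fun p : List ℕ × ℕ => (List.range p.1.length).findIdx
        fun m => decide ((evf p.1 (Nat.pair p.2 m)).getD 0 = 0) :=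
      Primrec.list_findIdx (Primrec.list_range.comp (Primrec.list_length.comp Primrec.fst))
        (Primrec.eq.decide.comp (Primrec.option_getD.comp (hpf.comp (Primrec.fst.comp Primrec.fst)
          (Primrec₂.natPair.comp (Primrec.snd.comp Primrec.fst) Primrec.snd)) (Primrec.const 0))
          (Primrec.const 0)).to₂
    exact Primrec.ite (Primrec.eq.comp (hpf.comp Primrec.fst (Primrec₂.natPair.comp Primrec.snd hi))
      (Primrec.const (some 0))) (Primrec.option_some.comp hi) (Primrec.const none)

section Approximation

variable {Fa : ℕ → ℕ → ℕ} {F : ℕ → ℕ}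

def fTilde (Fa : ℕ → ℕ → ℕ) (F : ℕ → ℕ) : Set ℕ :=
  {m : ℕ | ∃ y t, m = Nat.pair y t ∧ Fa t y = 1 ∧ F y = 1 ∧ Fa (t + 1) y = 0}

def uTilde (Fa : ℕ → ℕ → ℕ) : Set ℕ :=
  {m : ℕ | ∃ y t, m = Nat.pair y t ∧
    (∃ x s, x < y ∧ y < s ∧ Fa s x ≠ Fa (s + 1) x ∧ Fa s y = 1 ∧ Fa t y = 1) ∧ Fa (t + 1) y = 0}

def vTilde (Fa : ℕ → ℕ → ℕ) : Set ℕ :=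
  {m : ℕ | ∃ y t, m = Nat.pair y t ∧ (∃ s > t, Fa s y = 1 ∧ Fa t y = 1) ∧ Fa (t + 1) y = 0}

theorem limit_le_one (hval : ∀ s x, Fa s x ≤ 1) (hlim : ∀ x, ∃ N, ∀ s ≥ N, Fa s x = F x)
    (y : ℕ) : F y ≤ 1 := by
  obtain ⟨N, hN⟩ := hlim y
  exact hN N le_rfl ▸ hval N y

theorem eq_limit_of_change_below (hlim : ∀ x, ∃ N, ∀ s ≥ N, Fa s x = F x)
    (hmon : ∀ x y s t, x < y → y < s → s < t → Fa s x ≠ Fa (s + 1) x → Fa s y = Fa t y)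
    {x y s : ℕ} (hxy : x < y) (hys : y < s) (hx : Fa s x ≠ Fa (s + 1) x) : Fa s y = F y := by
  obtain ⟨N, hN⟩ := hlim y
  rw [hmon x y s (max N (s + 1)) hxy hys (by omega) hx, hN _ (le_max_left _ _)]

theorem uTilde_subset_fTilde (hlim : ∀ x, ∃ N, ∀ s ≥ N, Fa s x = F x)
    (hmon : ∀ x y s t, x < y → y < s → s < t → Fa s x ≠ Fa (s + 1) x → Fa s y = Fa t y) :
    uTilde Fa ⊆ fTilde Fa F := by
  rintro _ ⟨y, t, rfl, ⟨x, s, hxy, hys, hx, hsy, hty⟩, hexit⟩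
  exact ⟨y, t, rfl, hty, eq_limit_of_change_below hlim hmon hxy hys hx ▸ hsy, hexit⟩

theorem fTilde_subset_vTilde (hlim : ∀ x, ∃ N, ∀ s ≥ N, Fa s x = F x) :
    fTilde Fa F ⊆ vTilde Fa := by
  rintro _ ⟨y, t, rfl, hty, hy, hexit⟩
  obtain ⟨N, hN⟩ := hlim y
  exact ⟨y, t, rfl, ⟨max N (t + 1), by omega, (hN _ (le_max_left _ _)).trans hy, hty⟩, hexit⟩

/-- A change of some `y < w` after stage `w` would freeze `w` at `1` and put `⟨w, t⟩` into `Ũ`. -/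
theorem limit_eq_of_exit_notMem {Z : Set ℕ} (hlim : ∀ x, ∃ N, ∀ s ≥ N, Fa s x = F x)
    (hmon : ∀ x y s t, x < y → y < s → s < t → Fa s x ≠ Fa (s + 1) x → Fa s y = Fa t y)
    (hUZ : uTilde Fa ⊆ Z) {w t : ℕ} (hwt : Nat.pair w t ∉ Z) (hw : F w = 1)
    (hexit : Fa t w = 1 ∧ Fa (t + 1) w = 0) {y : ℕ} (hyw : y < w) : F y = Fa (w + 1) y := by
  have hstable : ∀ s, w < s → Fa s y = Fa (s + 1) y := by
    intro s hws
    by_contra hchange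
    have hsw : Fa s w = 1 := (eq_limit_of_change_below hlim hmon hyw hws hchange).trans hw
    exact hwt (hUZ ⟨w, t, rfl, ⟨y, s, hyw, hws, hchange, hsw, hexit.1⟩, hexit.2⟩)
  have hconst : ∀ s ≥ w + 1, Fa s y = Fa (w + 1) y := by
    intro s hs
    induction s, hs using Nat.le_induction with
    | base => rfl
    | succ s hs ih => rw [← hstable s (by omega), ih]
  obtain ⟨N, hN⟩ := hlim y
  rw [← hN (max N (w + 1)) (le_max_left _ _), hconst _ (le_max_right _ _)]

/-- The last exit of `y`: as `y` never returns to the approximation, it is not in `Ṽ ⊇ Z`. -/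
theorem exists_exit_notMem_of_limit_eq_zero {Z : Set ℕ} (hval : ∀ s x, Fa s x ≤ 1)
    (hlim : ∀ x, ∃ N, ∀ s ≥ N, Fa s x = F x) (h0 : ∀ x, Fa 0 x = 1) (hZV : Z ⊆ vTilde Fa)
    {y : ℕ} (hy : F y = 0) : ∃ t, (Fa t y = 1 ∧ Fa (t + 1) y = 0) ∧ Nat.pair y t ∉ Z := by
  classical
  obtain ⟨N, hN⟩ := hlim y
  set t := Nat.findGreatest (fun t => Fa t y = 1) N
  have ht : Fa t y = 1 := Nat.findGreatest_spec (P := fun t => Fa t y = 1) (Nat.zero_le N) (h0 y)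
  have hafter : ∀ s, t < s → Fa s y = 0 := by
    intro s hts
    rcases le_or_gt s N with hsN | hNs
    · have := Nat.findGreatest_is_greatest hts hsN
      have := hval s y
      omega
    · rw [hN s hNs.le, hy]
  refine ⟨t, ⟨ht, hafter _ (by omega)⟩, fun hmem => ?_⟩
  obtain ⟨y', t', hpair, ⟨s, hts, hs, -⟩, -⟩ := hZV hmem
  obtain ⟨rfl, rfl⟩ := Nat.pair_eq_pair.1 hpair
  rw [hafter s hts] at hs
  omega

end Approximation

theorem ce_setOf_exists {p : ℕ → ℕ → Bool} (hp : Computable₂ p) : CE {m | ∃ k, p m k = true} := by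
  refine ⟨fun m => Nat.rfind fun k => Part.some (p m k),
    Partrec.nat_iff.1 (Partrec.rfind hp.partrec₂), fun m => ?_⟩
  constructor
  · rintro ⟨k, hk⟩
    exact Nat.rfind_dom.2 ⟨k, by simp [hk], fun _ => trivial⟩
  · intro h
    obtain ⟨k, hk, -⟩ := Nat.rfind_dom.1 h
    exact ⟨k, (Part.mem_some_iff.1 hk).symm⟩

section Computability

variable {α : Type*} [Primcodable α] {Fa : ℕ → ℕ → ℕ}

theorem Computable.decide_eq {a b : α → ℕ} (ha : Computable a) (hb : Computable b) :
    Computable fun z => decide (a z = b z) :=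
  Primrec.eq.decide.to_comp.comp ha hb

theorem Computable.decide_lt {a b : α → ℕ} (ha : Computable a) (hb : Computable b) :
    Computable fun z => decide (a z < b z) :=
  Primrec.nat_lt.decide.to_comp.comp ha hb

theorem Computable.and {a b : α → Bool} (ha : Computable a) (hb : Computable b) :
    Computable fun z => a z && b z :=
  Primrec.and.to_comp.comp ha hb

def exitB (Fa : ℕ → ℕ → ℕ) (y t : ℕ) : Bool := decide (Fa t y = 1) && decide (Fa (t + 1) y = 0)

theorem exitB_eq_true {y t : ℕ} : exitB Fa y t = true ↔ Fa t y = 1 ∧ Fa (t + 1) y = 0 := by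
  simp [exitB]

theorem Computable.exitB (hcomp : Computable fun p : ℕ × ℕ => Fa p.1 p.2) {y t : α → ℕ}
    (hy : Computable y) (ht : Computable t) : Computable fun z => _root_.exitB Fa (y z) (t z) :=
  ((hcomp.comp (ht.pair hy)).decide_eq (Computable.const 1)).and
    ((hcomp.comp ((Computable.succ.comp ht).pair hy)).decide_eq (Computable.const 0))

end Computability

section Enumerability

variable {Fa : ℕ → ℕ → ℕ}

theorem ce_uTilde (hcomp : Computable fun p : ℕ × ℕ => Fa p.1 p.2) : CE (uTilde Fa) := by
  let witness : ℕ → ℕ → Bool := fun m k =>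
    decide (k.unpair.1 < m.unpair.1) && decide (m.unpair.1 < k.unpair.2) &&
      !decide (Fa k.unpair.2 k.unpair.1 = Fa (k.unpair.2 + 1) k.unpair.1) &&
      decide (Fa k.unpair.2 m.unpair.1 = 1) && exitB Fa m.unpair.1 m.unpair.2
  have hy : Computable fun p : ℕ × ℕ => p.1.unpair.1 :=
    Computable.fst.comp (Computable.unpair.comp Computable.fst)
  have ht : Computable fun p : ℕ × ℕ => p.1.unpair.2 :=
    Computable.snd.comp (Computable.unpair.comp Computable.fst)
  have hx : Computable fun p : ℕ × ℕ => p.2.unpair.1 :=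
    Computable.fst.comp (Computable.unpair.comp Computable.snd)
  have hs : Computable fun p : ℕ × ℕ => p.2.unpair.2 :=
    Computable.snd.comp (Computable.unpair.comp Computable.snd)
  have hwitness : Computable₂ witness :=
    ((((hx.decide_lt hy).and (hy.decide_lt hs)).and (Primrec.not.to_comp.comp
      ((hcomp.comp (hs.pair hx)).decide_eq
        (hcomp.comp ((Computable.succ.comp hs).pair hx))))).and
      ((hcomp.comp (hs.pair hy)).decide_eq (Computable.const 1))).and
      (Computable.exitB hcomp hy ht)
  convert ce_setOf_exists hwitness using 1
  ext m
  constructor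
  · rintro ⟨y, t, rfl, ⟨x, s, hxy, hys, hx, hsy, hty⟩, hexit⟩
    exact ⟨Nat.pair x s, by simp [witness, exitB, *]⟩
  · rintro ⟨k, hk⟩
    simp only [witness, Bool.and_eq_true, decide_eq_true_eq, Bool.not_eq_true',
      decide_eq_false_iff_not, exitB_eq_true] at hk
    obtain ⟨⟨⟨⟨hxy, hys⟩, hx⟩, hsy⟩, hty, hexit⟩ := hk
    exact ⟨_, _, (Nat.pair_unpair m).symm, ⟨_, _, hxy, hys, hx, hsy, hty⟩, hexit⟩

theorem ce_vTilde (hcomp : Computable fun p : ℕ × ℕ => Fa p.1 p.2) : CE (vTilde Fa) := by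
  let witness : ℕ → ℕ → Bool := fun m s =>
    decide (m.unpair.2 < s) && decide (Fa s m.unpair.1 = 1) && exitB Fa m.unpair.1 m.unpair.2
  have hy : Computable fun p : ℕ × ℕ => p.1.unpair.1 :=
    Computable.fst.comp (Computable.unpair.comp Computable.fst)
  have ht : Computable fun p : ℕ × ℕ => p.1.unpair.2 :=
    Computable.snd.comp (Computable.unpair.comp Computable.fst)
  have hwitness : Computable₂ witness :=
    ((ht.decide_lt Computable.snd).and
      ((hcomp.comp (Computable.snd.pair hy)).decide_eq (Computable.const 1))).and
      (Computable.exitB hcomp hy ht)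
  convert ce_setOf_exists hwitness using 1
  ext m
  constructor
  · rintro ⟨y, t, rfl, ⟨s, hts, hsy, hty⟩, hexit⟩
    exact ⟨s, by simp [witness, exitB, *]⟩
  · rintro ⟨s, hs⟩
    simp only [witness, Bool.and_eq_true, decide_eq_true_eq, exitB_eq_true] at hs
    obtain ⟨⟨hts, hsy⟩, hty, hexit⟩ := hs
    exact ⟨_, _, (Nat.pair_unpair m).symm, ⟨s, hts, hsy, hty⟩, hexit⟩

end Enumerability

section Join

variable {E Z : Set ℕ}

theorem chi_join_two_mul (n : ℕ) : chi (join E Z) (2 * n) = chi E n := by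
  have : 2 * n ∈ join E Z ↔ n ∈ E := by simp [join]; omega
  unfold chi
  split_ifs <;> simp_all

theorem chi_join_two_mul_add_one (n : ℕ) : chi (join E Z) (2 * n + 1) = chi Z n := by
  have : 2 * n + 1 ∈ join E Z ↔ n ∈ Z := by simp [join]; omega
  unfold chi
  split_ifs <;> simp_all

theorem recursiveInFn_chi_join_left : RecursiveInFn (chi (join E Z)) ↑(chi E) :=
  (RecursiveInFn.oracle.comp_total (RecursiveInFn.of_computable (f := fun n => 2 * n)
    (Primrec.nat_mul.comp (Primrec.const 2) Primrec.id).to_comp)).of_eq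
    fun n => by simp [chi_join_two_mul]

theorem getElem?_oracleTab_join_odd_eq_zero {k p : ℕ} :
    (oracleTab (chi (join E Z)) k)[2 * p + 1]? = some 0 ↔ 2 * p + 1 < k ∧ p ∉ Z := by
  rw [getElem?_oracleTab_eq_some, chi_join_two_mul_add_one]
  simp [chi]

end Join

/-- `L` is read as a table of `E ⊕ Z`, whose entry `2 * ⟨y, t⟩ + 1` is `Z`'s bit at `⟨y, t⟩`. -/
def exitOutsideB (Fa : ℕ → ℕ → ℕ) (L : List ℕ) (y t : ℕ) : Bool :=
  exitB Fa y t && decide (L[2 * Nat.pair y t + 1]? = some 0)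

theorem exitOutsideB_oracleTab_eq_true {Fa : ℕ → ℕ → ℕ} {E Z : Set ℕ} {k y t : ℕ} :
    exitOutsideB Fa (oracleTab (chi (join E Z)) k) y t = true ↔
      (Fa t y = 1 ∧ Fa (t + 1) y = 0) ∧ 2 * Nat.pair y t + 1 < k ∧ Nat.pair y t ∉ Z := by
  simp [exitOutsideB, exitB_eq_true, getElem?_oracleTab_join_odd_eq_zero]

theorem Computable.exitOutsideB {α : Type*} [Primcodable α] {Fa : ℕ → ℕ → ℕ}
    (hcomp : Computable fun p : ℕ × ℕ => Fa p.1 p.2) {L : α → List ℕ} {y t : α → ℕ}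
    (hL : Computable L) (hy : Computable y) (ht : Computable t) :
    Computable fun z => _root_.exitOutsideB Fa (L z) (y z) (t z) :=
  (Computable.exitB hcomp hy ht).and (Primrec.eq.decide.to_comp.comp
    (Primrec.list_getElem?.to_comp.comp hL (Primrec.succ.to_comp.comp
      (Primrec.nat_mul.to_comp.comp (Computable.const 2) (Primrec₂.natPair.to_comp.comp hy ht))))
    (Computable.const (some 0)))

section Reduction

variable {E Z : Set ℕ} {F : ℕ → ℕ} {Fa : ℕ → ℕ → ℕ} {f : ℕ →. ℕ}
  {ev : List ℕ → ℕ → Option ℕ}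

/-- `F y = Fa (w + 1) y` for every `w > y` in `F` with an exit outside `Z`; search for one. -/
theorem recursiveInFn_limit_of_exits_unbounded (hcomp : Computable fun p : ℕ × ℕ => Fa p.1 p.2)
    (hlim : ∀ x, ∃ N, ∀ s ≥ N, Fa s x = F x)
    (hmon : ∀ x y s t, x < y → y < s → s < t → Fa s x ≠ Fa (s + 1) x → Fa s y = Fa t y)
    (hUZ : uTilde Fa ⊆ Z) (hev : Primrec₂ ev) (happrox : IsStageApprox (chi (join E Z)) f ev)
    (hdom : ∀ w, F w = 1 ↔ (f w).Dom)
    (hexits : ∀ b, ∃ w t, b < w ∧ F w = 1 ∧ (Fa t w = 1 ∧ Fa (t + 1) w = 0) ∧ Nat.pair w t ∉ Z) :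
    RecursiveInFn (chi (join E Z)) ↑F := by
  refine recursiveInFn_of_search
    (g := fun y j L => if y < j.unpair.1 ∧ (ev L j.unpair.1).isSome ∧
      exitOutsideB Fa L j.unpair.1 j.unpair.2 then some (Fa (j.unpair.1 + 1) y) else none)
    ?_ (fun y => ?_) (fun y j k v hv => ?_)
  · have hy : Computable fun p : ℕ × ℕ × List ℕ => p.1 := Computable.fst
    have hw : Computable fun p : ℕ × ℕ × List ℕ => p.2.1.unpair.1 :=
      Computable.fst.comp (Computable.unpair.comp (Computable.fst.comp Computable.snd))
    have ht : Computable fun p : ℕ × ℕ × List ℕ => p.2.1.unpair.2 :=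
      Computable.snd.comp (Computable.unpair.comp (Computable.fst.comp Computable.snd))
    have hL : Computable fun p : ℕ × ℕ × List ℕ => p.2.2 := Computable.snd.comp Computable.snd
    refine (Computable.cond (((hy.decide_lt hw).and
        (Primrec.option_isSome.to_comp.comp (hev.to_comp.comp hL hw))).and
          (Computable.exitOutsideB hcomp hL hw ht))
      (Computable.option_some.comp (hcomp.comp ((Computable.succ.comp hw).pair hy)))
      (Computable.const none)).of_eq fun p => ?_
    simp [Bool.cond_eq_ite, and_assoc]
  · obtain ⟨w, t, hyw, hw, hexit, hwt⟩ := hexits y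
    obtain ⟨k, hk, hkwt⟩ := ((happrox.eventually_isSome ((hdom w).1 hw)).and
      (eventually_gt_atTop (2 * Nat.pair w t + 1))).exists
    exact ⟨Nat.pair w t, k, by simp [exitOutsideB_oracleTab_eq_true, *]⟩
  · split_ifs at hv with h
    obtain ⟨hyw, hw, hexit⟩ := h
    obtain ⟨hexit, -, hwt⟩ := exitOutsideB_oracleTab_eq_true.1 hexit
    cases hv
    exact (limit_eq_of_exit_notMem hlim hmon hUZ hwt ((hdom _).2 (happrox.dom_of_isSome hw))
      hexit hyw).symm

/-- For `y > b`, either `y` is enumerated into `F` or it has an exit outside `Z`, and the latter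
shows `y ∉ F`. -/
theorem recursiveInFn_limit_of_exits_bounded (hcomp : Computable fun p : ℕ × ℕ => Fa p.1 p.2)
    (hval : ∀ s x, Fa s x ≤ 1) (hlim : ∀ x, ∃ N, ∀ s ≥ N, Fa s x = F x) (h0 : ∀ x, Fa 0 x = 1)
    (hZV : Z ⊆ vTilde Fa) (hev : Primrec₂ ev) (happrox : IsStageApprox (chi (join E Z)) f ev)
    (hdom : ∀ w, F w = 1 ↔ (f w).Dom) {b : ℕ}
    (hb : ∀ w t, b < w → F w = 1 → Fa t w = 1 ∧ Fa (t + 1) w = 0 → Nat.pair w t ∈ Z) :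
    RecursiveInFn (chi (join E Z)) ↑F := by
  refine recursiveInFn_of_search
    (g := fun y j L => if y ≤ b then some (((List.range (b + 1)).map F).getD y 0)
      else if (ev L y).isSome then some 1
      else if exitOutsideB Fa L y j then some 0 else none)
    ?_ (fun y => ?_) (fun y j k v hv => ?_)
  · have hy : Computable fun p : ℕ × ℕ × List ℕ => p.1 := Computable.fst
    have hj : Computable fun p : ℕ × ℕ × List ℕ => p.2.1 := Computable.fst.comp Computable.snd
    have hL : Computable fun p : ℕ × ℕ × List ℕ => p.2.2 := Computable.snd.comp Computable.snd
    refine (Computable.cond (Primrec.nat_le.decide.to_comp.comp hy (Computable.const b))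
      (Computable.option_some.comp ((Primrec.list_getD 0).to_comp.comp
        (Computable.const ((List.range (b + 1)).map F)) hy))
      (Computable.cond (Primrec.option_isSome.to_comp.comp (hev.to_comp.comp hL hy))
        (Computable.const (some 1))
        (Computable.cond (Computable.exitOutsideB hcomp hL hy hj) (Computable.const (some 0))
          (Computable.const none)))).of_eq fun p => ?_
    simp [Bool.cond_eq_ite]
  · by_cases hyb : y ≤ b
    · exact ⟨0, 0, by simp [hyb]⟩
    rcases Nat.le_one_iff_eq_zero_or_eq_one.1 (limit_le_one hval hlim y) with hy | hy
    · obtain ⟨t, hexit, hyt⟩ := exists_exit_notMem_of_limit_eq_zero hval hlim h0 hZV hy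
      refine ⟨t, 2 * Nat.pair y t + 2, ?_⟩
      have : exitOutsideB Fa (oracleTab (chi (join E Z)) (2 * Nat.pair y t + 2)) y t :=
        exitOutsideB_oracleTab_eq_true.2 ⟨hexit, by omega, hyt⟩
      split_ifs <;> simp_all
    · obtain ⟨k, hk⟩ := (happrox.eventually_isSome ((hdom y).1 hy)).exists
      exact ⟨0, k, by simp [hyb, hk]⟩
  · split_ifs at hv with hyb hy hexit <;> cases hv
    · simp [List.getD_eq_getElem?_getD, List.getElem?_range (Nat.lt_succ_of_le hyb)]
    · exact ((hdom y).2 (happrox.dom_of_isSome hy)).symm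
    · obtain ⟨hexit, -, hyj⟩ := exitOutsideB_oracleTab_eq_true.1 hexit
      have : F y ≠ 1 := fun hy => hyj (hb y j (not_le.1 hyb) hy hexit)
      have := limit_le_one hval hlim y
      omega

end Reduction

theorem setTuringRed_join {E Z : Set ℕ} {F : ℕ → ℕ} {Fa : ℕ → ℕ → ℕ}
    (hFce : CEIn (chi E) {x | F x = 1}) (hcomp : Computable fun p : ℕ × ℕ => Fa p.1 p.2)
    (hval : ∀ s x, Fa s x ≤ 1) (hlim : ∀ x, ∃ N, ∀ s ≥ N, Fa s x = F x) (h0 : ∀ x, Fa 0 x = 1)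
    (hmon : ∀ x y s t, x < y → y < s → s < t → Fa s x ≠ Fa (s + 1) x → Fa s y = Fa t y)
    (hUZ : uTilde Fa ⊆ Z) (hZV : Z ⊆ vTilde Fa) : SetTuringRed {x | F x = 1} (join E Z) := by
  obtain ⟨f, hf, hdom⟩ := hFce
  obtain ⟨ev, hev, happrox⟩ := (hf.trans recursiveInFn_chi_join_left).exists_stageApprox
  have hchi : chi {x | F x = 1} = F := funext fun y => by
    have := limit_le_one hval hlim y
    unfold chi
    split_ifs with h <;> simp only [Set.mem_ofPred_eq] at h <;> omega
  rw [SetTuringRed, hchi]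
  by_cases hexits : ∀ b, ∃ w t, b < w ∧ F w = 1 ∧ (Fa t w = 1 ∧ Fa (t + 1) w = 0) ∧
      Nat.pair w t ∉ Z
  · exact recursiveInFn_limit_of_exits_unbounded hcomp hlim hmon hUZ hev happrox hdom hexits
  · push Not at hexits
    obtain ⟨b, hb⟩ := hexits
    exact recursiveInFn_limit_of_exits_bounded hcomp hval hlim h0 hZV hev happrox hdom hb

theorem stmt7_general (E : Set ℕ) (F : ℕ → ℕ) (Fa : ℕ → ℕ → ℕ)
    (hFce : CEIn (chi E) {x | F x = 1})
    (hcomp : Computable fun p : ℕ × ℕ => Fa p.1 p.2)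
    (hval : ∀ s x, Fa s x ≤ 1)
    (hlim : ∀ x, ∃ N, ∀ s ≥ N, Fa s x = F x)
    (h0 : ∀ x, Fa 0 x = 1)
    (hmon : ∀ x y s t, x < y → y < s → s < t → Fa s x ≠ Fa (s + 1) x → Fa s y = Fa t y)
    (Ft Ut Vt : Set ℕ)
    (hFt : Ft = {m : ℕ | ∃ y t, m = Nat.pair y t ∧
      Fa t y = 1 ∧ F y = 1 ∧ Fa (t + 1) y = 0})
    (hUt : Ut = {m : ℕ | ∃ y t, m = Nat.pair y t ∧
      (∃ x s, x < y ∧ y < s ∧ Fa s x ≠ Fa (s + 1) x ∧ Fa s y = 1 ∧ Fa t y = 1) ∧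
      Fa (t + 1) y = 0})
    (hVt : Vt = {m : ℕ | ∃ y t, m = Nat.pair y t ∧
      (∃ s > t, Fa s y = 1 ∧ Fa t y = 1) ∧ Fa (t + 1) y = 0}) :
    CE Ut ∧ CE Vt ∧ Ut ⊆ Ft ∧ Ft ⊆ Vt ∧
      ∀ Z : Set ℕ, Ut ⊆ Z → Z ⊆ Vt → SetTuringRed {x | F x = 1} (join E Z) := by
  subst hFt hUt hVt
  exact ⟨ce_uTilde hcomp, ce_vTilde hcomp, uTilde_subset_fTilde hlim hmon,
    fTilde_subset_vTilde hlim,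
    fun Z hUZ hZV => setTuringRed_join hFce hcomp hval hlim h0 hmon hUZ hZV⟩

theorem stmt7 (E : Set ℕ) (hE : CE E) (F : ℕ → ℕ) (Fa : ℕ → ℕ → ℕ)
    (hFce : CEIn (chi E) {x | F x = 1})
    (hcomp : Computable fun p : ℕ × ℕ => Fa p.1 p.2)
    (hval : ∀ s x, Fa s x ≤ 1)
    (hlim : ∀ x, ∃ N, ∀ s ≥ N, Fa s x = F x)
    (h0 : ∀ x, Fa 0 x = 1) (h1 : ∀ x, Fa 1 x = 0)
    (hmon : ∀ x y s t, x < y → y < s → s < t → Fa s x ≠ Fa (s + 1) x → Fa s y = Fa t y)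
    (Ft Ut Vt : Set ℕ)
    (hFt : Ft = {m : ℕ | ∃ y t, m = Nat.pair y t ∧
      Fa t y = 1 ∧ F y = 1 ∧ Fa (t + 1) y = 0})
    (hUt : Ut = {m : ℕ | ∃ y t, m = Nat.pair y t ∧
      (∃ x s, x < y ∧ y < s ∧ Fa s x ≠ Fa (s + 1) x ∧ Fa s y = 1 ∧ Fa t y = 1) ∧
      Fa (t + 1) y = 0})
    (hVt : Vt = {m : ℕ | ∃ y t, m = Nat.pair y t ∧
      (∃ s > t, Fa s y = 1 ∧ Fa t y = 1) ∧ Fa (t + 1) y = 0}) :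
    CE Ut ∧ CE Vt ∧ Ut ⊆ Ft ∧ Ft ⊆ Vt ∧
      ∀ Z : Set ℕ, Ut ⊆ Z → Z ⊆ Vt → SetTuringRed {x | F x = 1} (join E Z) :=
  stmt7_general E F Fa hFce hcomp hval hlim h0 hmon Ft Ut Vt hFt hUt hVt
end
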